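/- arXiv:2509.01887 — 6 statements merged into one kernel-verified Lean document; each statement's English description precedes it below -/
import Mathlib

section
/- Let V be a finite set and let C be a coloring of V using χ colors. Then there exists a colored separating system on (V, C) with at most 2·⌈log₂ χ⌉ elements. -/
universe u

/-- A directed mixed graph (DMG): directed edges `D` (no self-loops) and
bidirected edges `B` (symmetric, no self-loops). -/
structure DMG (V : Type u) where
  D : V → V → Prop
  B : V → V → Prop
  D_irrefl : ∀ x, ¬ D x x
  B_symm : ∀ x y, B x y → B y x
  B_irrefl : ∀ x, ¬ B x x

namespace DMG

variable {V : Type u}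

/-- `x` is an ancestor of `y` (reflexive-transitive closure of `D`). -/
def anc (G : DMG V) (x y : V) : Prop := Relation.ReflTransGen G.D x y

/-- ancestors of a set of vertices -/
def ancSet (G : DMG V) (W : Set V) : Set V := {x | ∃ y ∈ W, G.anc x y}

/-- the strongly connected component of `x` -/
def scc (G : DMG V) (x : V) : Set V := {y | G.anc x y ∧ G.anc y x}

/-- parents of a vertex -/
def pa (G : DMG V) (x : V) : Set V := {y | G.D y x}

/-- parents of a set of vertices -/
def paSet (G : DMG V) (W : Set V) : Set V := {y | ∃ x ∈ W, G.D y x}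

/-- non-adjacent bidirected edges -/
def BN (G : DMG V) : V → V → Prop := fun x y => G.B x y ∧ ¬ G.D x y ∧ ¬ G.D y x

/-- the intervened graph `G_Ī` -/
def intervene (G : DMG V) (I : Set V) : DMG V where
  D a b := G.D a b ∧ b ∉ I
  B a b := G.B a b ∧ a ∉ I ∧ b ∉ I
  D_irrefl := fun x h => G.D_irrefl x h.1
  B_symm := fun x y h => ⟨G.B_symm x y h.1, h.2.2, h.2.1⟩
  B_irrefl := fun x h => G.B_irrefl x h.1

/-- the directed skeleton `G^u` -/
def skel (G : DMG V) : SimpleGraph V where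
  Adj x y := x ≠ y ∧ (G.D x y ∨ G.D y x)
  symm := ⟨fun _ _ h => ⟨h.1.symm, h.2.elim Or.inr Or.inl⟩⟩
  loopless := ⟨fun _ h => h.1 rfl⟩

/-- the undirected component graph `G^{uc}` -/
def ucomp (G : DMG V) : SimpleGraph V where
  Adj x y := x ≠ y ∧ ¬ G.D x y ∧ ¬ G.D y x
  symm := ⟨fun _ _ h => ⟨h.1.symm, h.2.2, h.2.1⟩⟩
  loopless := ⟨fun _ h => h.1 rfl⟩

/-- `S` is an SCC of `G` -/
def isSCC (G : DMG V) (S : Set V) : Prop := ∃ x, S = G.scc x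

/-- `S` is an SCC-ancestor of the distinct SCC `S'` -/
def sccAncestor (G : DMG V) (S S' : Set V) : Prop :=
  S ≠ S' ∧ ∃ x ∈ S, ∃ y ∈ S', G.anc x y

/-- `S` is a `k`-order SCC-ancestor of `S'`: there is a directed path from a
vertex of `S` to a vertex of `S'` passing through at most `k-1` SCCs other than
`S` and `S'`. -/
def kOrderSCCAnc (G : DMG V) (k : ℕ) (S S' : Set V) : Prop :=
  S ≠ S' ∧ ∃ p : List V, p ≠ [] ∧ p.Chain' G.D ∧
    (∃ x ∈ S, p.head? = some x) ∧ (∃ y ∈ S', p.getLast? = some y) ∧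
    ({C : Set V | ∃ z ∈ p, z ∉ S ∧ z ∉ S' ∧ C = G.scc z}).ncard ≤ k - 1

/-- `G` has SCC-Anc length `l` : `l` is the least integer such that every
SCC-ancestor of any SCC is an `l`-order SCC-ancestor. -/
def sccAncLength (G : DMG V) (l : ℕ) : Prop :=
  IsLeast {m | ∀ S S' : Set V, G.isSCC S → G.isSCC S' →
    G.sccAncestor S' S → G.kOrderSCCAnc m S' S} l

/-- membership in the first layer `𝒯_1` of the SCC-Anc partition -/
def sccLayer0 (G : DMG V) (S : Set V) : Prop :=
  G.isSCC S ∧ ¬ ∃ S' : Set V, G.isSCC S' ∧ G.sccAncestor S' S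

/-- `m` is the least order at which `S'` is an SCC-ancestor of `S` -/
def minOrd (G : DMG V) (S' S : Set V) (m : ℕ) : Prop :=
  IsLeast {j | G.kOrderSCCAnc j S' S} m

/-- membership in the layer `𝒯_{i+1}` of the SCC-Anc partition (0-indexed `i`):
for `i ≥ 1`, `S ∈ 𝒯_{i+1}` iff some SCC of `𝒯_1` is an `i`-order SCC-ancestor
of `S` and no SCC of `𝒯_1` is only an `r`-order SCC-ancestor of `S` for `r > i`,
i.e. `i` is the largest minimal order of a `𝒯_1` SCC-ancestor of `S`. -/
def sccLayer (G : DMG V) (i : ℕ) (S : Set V) : Prop :=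
  if i = 0 then G.sccLayer0 S
  else G.isSCC S ∧ IsGreatest {m | ∃ S' : Set V, G.sccLayer0 S' ∧ G.minOrd S' S m} i

/-- `T_{k+1}` (0-indexed `k`): the set of vertices in layers `𝒯_1, …, 𝒯_k` -/
def TUnion (G : DMG V) (k : ℕ) : Set V :=
  {v | ∃ i < k, ∃ S : Set V, G.sccLayer i S ∧ v ∈ S}

/-- SCC-Anc separating system on `(V, 𝕋^G)` (layers 0-indexed by `0,…,l`) -/
def SCCAncSepSystem (G : DMG V) (l : ℕ) (𝓘 : Set (Set V)) : Prop :=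
  ∀ k ≤ l, ∀ S : Set V, G.sccLayer k S → ∀ X ∈ S,
    ∃ I ∈ 𝓘, (G.TUnion k ∪ S) \ {X} ⊆ I ∧ X ∉ I

/-- `G` with the directed edge `(F, S)` removed -/
def removeDir (G : DMG V) (F S : V) : DMG V where
  D a b := G.D a b ∧ ¬(a = F ∧ b = S)
  B := G.B
  D_irrefl := fun x h => G.D_irrefl x h.1
  B_symm := G.B_symm
  B_irrefl := fun x h => G.B_irrefl x h

/-- `G` with the bidirected edge `{S, R}` removed -/
def removeBi (G : DMG V) (S R : V) : DMG V where
  D := G.D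
  B a b := G.B a b ∧ ¬((a = S ∧ b = R) ∨ (a = R ∧ b = S))
  D_irrefl := G.D_irrefl
  B_symm := by
    intro x y h
    refine ⟨G.B_symm x y h.1, ?_⟩
    rintro (⟨h1, h2⟩ | ⟨h1, h2⟩)
    · exact h.2 (Or.inr ⟨h2, h1⟩)
    · exact h.2 (Or.inl ⟨h2, h1⟩)
  B_irrefl := fun x h => G.B_irrefl x h.1

end DMG

/-- kinds of edges along a mixed path: forward directed, backward directed, bidirected -/
inductive EKind | fwd | bwd | bi

/-- a mixed path skeleton: `k ≥ 1` steps, vertices `Z 0, …, Z k`, edges `E 0, …, E (k-1)`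
(step `i` joins `Z i` and `Z (i+1)`). -/
structure MPath (V : Type u) where
  k : ℕ
  Z : ℕ → V
  E : ℕ → EKind
  hk : 1 ≤ k

namespace MPath

variable {V : Type u}

/-- the path is a path of `G` -/
def valid (p : MPath V) (G : DMG V) : Prop :=
  ∀ i < p.k,
    (p.E i = EKind.fwd → G.D (p.Z i) (p.Z (i+1))) ∧
    (p.E i = EKind.bwd → G.D (p.Z (i+1)) (p.Z i)) ∧
    (p.E i = EKind.bi → G.B (p.Z i) (p.Z (i+1)))

/-- the step has an arrowhead at its second endpoint -/
def headAtSnd : EKind → Prop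
  | EKind.fwd => True
  | EKind.bi => True
  | EKind.bwd => False

/-- the step has an arrowhead at its first endpoint -/
def headAtFst : EKind → Prop
  | EKind.bwd => True
  | EKind.bi => True
  | EKind.fwd => False

/-- `Z i` is a collider on the path (meaningful for `1 ≤ i ≤ k-1`) -/
def collider (p : MPath V) (i : ℕ) : Prop :=
  headAtSnd (p.E (i-1)) ∧ headAtFst (p.E i)

end MPath

/-- the separation rule: `d`-separation or `σ`-separation -/
inductive SepRule | d | s

/-- the path between `x` and `y` is `r`-blocked by `S` in `G` -/
def MPath.blocked {V : Type u} (p : MPath V) (G : DMG V) (r : SepRule) (S : Set V)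
    (x y : V) : Prop :=
  ∃ i, 1 ≤ i ∧ i < p.k ∧
    ((p.collider i ∧ p.Z i ∉ G.ancSet (S ∪ {x, y})) ∨
     (¬ p.collider i ∧ p.Z i ∈ S ∧
       (r = SepRule.d ∨
        (p.E i = EKind.fwd ∧ p.Z (i+1) ∉ G.scc (p.Z i)) ∨
        (p.E (i-1) = EKind.bwd ∧ p.Z (i-1) ∉ G.scc (p.Z i)))))

/-- `S` `r`-separates `x` and `y` in `G` -/
def rSep {V : Type u} (G : DMG V) (r : SepRule) (S : Set V) (x y : V) : Prop :=
  ∀ p : MPath V, p.valid G → p.Z 0 = x → p.Z p.k = y → p.blocked G r S x y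

/-- the `r`-independence model of `G` -/
def IM {V : Type u} (G : DMG V) (r : SepRule) : Set (V × V × Set V) :=
  {t | t.1 ≠ t.2.1 ∧ t.1 ∉ t.2.2 ∧ t.2.1 ∉ t.2.2 ∧ rSep G r t.2.2 t.1 t.2.1}

/-- `G` and `H` are `𝓘`-`r`-Markov equivalent -/
def IMEquiv {V : Type u} (G H : DMG V) (r : SepRule) (𝓘 : Set (Set V)) : Prop :=
  ∀ I ∈ 𝓘, IM (G.intervene I) r = IM (H.intervene I) r

/-- a `d`-inducing path between `x` and `y`: every collider is an ancestor of `{x,y}` -/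
def MPath.dInducing {V : Type u} (p : MPath V) (G : DMG V) (x y : V) : Prop :=
  ∀ i, 1 ≤ i → i < p.k → p.collider i → p.Z i ∈ G.ancSet {x, y}

/-- a `σ`-inducing path between `x` and `y` -/
def MPath.sInducing {V : Type u} (p : MPath V) (G : DMG V) (x y : V) : Prop :=
  p.dInducing G x y ∧
  ∀ i, 1 ≤ i → i < p.k → ¬ p.collider i →
    (p.E (i-1) = EKind.bwd → p.Z (i-1) ∈ G.scc (p.Z i)) ∧
    (p.E i = EKind.fwd → p.Z (i+1) ∈ G.scc (p.Z i))

/-- an `r`-inducing path -/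
def MPath.rInducing {V : Type u} (p : MPath V) (G : DMG V) (r : SepRule) (x y : V) : Prop :=
  match r with
  | SepRule.d => p.dInducing G x y
  | SepRule.s => p.sInducing G x y

/-- colored separating system on `(V, C)` -/
def ColoredSepSystem {V : Type u} {γ : Type*} (C : V → γ) (𝓘 : Set (Set V)) : Prop :=
  ∀ X Y : V, C X ≠ C Y → ∃ I ∈ 𝓘, X ∈ I ∧ Y ∉ I

/-- non-adjacent separating system on `(V, D)` -/
def NonAdjSepSystem {V : Type u} (G : DMG V) (𝓘 : Set (Set V)) : Prop :=
  ∀ X Y : V, X ≠ Y → ¬ G.D X Y → ¬ G.D Y X →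
    ∃ I ∈ 𝓘, G.paSet {X, Y} ⊆ I ∧ X ∉ I ∧ Y ∉ I

/-- adjacent separating system on `(V, D)` -/
def AdjSepSystem {V : Type u} (G : DMG V) (𝓘 : Set (Set V)) : Prop :=
  ∀ X Y : V, G.D X Y → ¬ G.D Y X →
    (∃ I ∈ 𝓘, G.paSet {X, Y} \ {X, Y} ⊆ I ∧ X ∉ I ∧ Y ∉ I) ∧
    (∃ I' ∈ 𝓘, G.paSet {X, Y} \ {Y} ⊆ I' ∧ X ∈ I' ∧ Y ∉ I')

/-- the minimum edge clique cover number `cc(H)` -/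
noncomputable def ecc {V : Type u} (H : SimpleGraph V) : ℕ :=
  sInf {K | ∃ C : Fin K → Set V, (∀ k, H.IsClique (C k)) ∧
    ∀ x y : V, H.Adj x y → ∃ k, x ∈ C k ∧ y ∈ C k}

/-- two edges that must receive different colors in a strong edge coloring:
they are distinct and share an endpoint or are both incident to a common third edge -/
def StrongAdjE {V : Type u} (H : SimpleGraph V) (e₁ e₂ : Sym2 V) : Prop :=
  e₁ ≠ e₂ ∧ ((∃ v, v ∈ e₁ ∧ v ∈ e₂) ∨
    ∃ e₃ ∈ H.edgeSet, e₃ ≠ e₁ ∧ e₃ ≠ e₂ ∧ (∃ v, v ∈ e₁ ∧ v ∈ e₃) ∧ ∃ u, u ∈ e₂ ∧ u ∈ e₃)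

/-- the strong edge chromatic number `χ_s(H)` -/
noncomputable def strongChrom {V : Type u} (H : SimpleGraph V) : ℕ :=
  sInf {K | ∃ f : Sym2 V → Fin K, ∀ e₁ ∈ H.edgeSet, ∀ e₂ ∈ H.edgeSet,
    StrongAdjE H e₁ e₂ → f e₁ ≠ f e₂}

/-! Encode each color as a word of length `⌈log₂ χ⌉` over `{0, 1}`. For every position `j`
and letter `b`, take the vertices whose color has letter `b` at position `j`: two vertices of
different colors differ at some position `j`, and the set for `j` and the letter of `X` then
contains `X` but not `Y`. -/

theorem ColoredSepSystem.of_injective_code {V γ ι β : Type*} (C : V → γ) {code : γ → ι → β}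
    (hcode : Function.Injective code) :
    ColoredSepSystem C (Set.range fun p : ι × β => {v | code (C v) p.1 = p.2}) := by
  intro X Y hXY
  obtain ⟨i, hi⟩ := Function.ne_iff.mp (hcode.ne hXY)
  exact ⟨_, ⟨(i, code (C X) i), rfl⟩, rfl, Ne.symm hi⟩

theorem exists_coloredSepSystem_ncard_le {V γ ι β : Type*} [Finite ι] [Finite β] (C : V → γ)
    {code : γ → ι → β} (hcode : Function.Injective code) :
    ∃ 𝓘 : Set (Set V), 𝓘.Finite ∧ ColoredSepSystem C 𝓘 ∧
      𝓘.ncard ≤ Nat.card ι * Nat.card β :=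
  ⟨_, Set.finite_range _, .of_injective_code C hcode, by
    rw [← Nat.card_prod]
    exact Finite.card_range_le _⟩

theorem colored_separating_system_exists_general {V : Type u} {χ : ℕ} (C : V → Fin χ) :
    ∃ 𝓘 : Set (Set V), 𝓘.Finite ∧ ColoredSepSystem C 𝓘 ∧
      𝓘.ncard ≤ 2 * Nat.clog 2 χ := by
  have hχ : χ ≤ 2 ^ Nat.clog 2 χ := Nat.le_pow_clog one_lt_two χ
  have hcode : Function.Injective (finFunctionFinEquiv.symm ∘ Fin.castLE hχ) :=
    finFunctionFinEquiv.symm.injective.comp (Fin.castLE_injective hχ)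
  simpa only [Nat.card_fin, mul_comm] using exists_coloredSepSystem_ncard_le C hcode

/-- there is a colored separating system on `(V, C)` with at most
`2⌈log₂ χ⌉` elements. -/
theorem colored_separating_system_exists {V : Type u} [Fintype V] {χ : ℕ} (C : V → Fin χ) :
    ∃ 𝓘 : Set (Set V), 𝓘.Finite ∧ ColoredSepSystem C 𝓘 ∧
      𝓘.ncard ≤ 2 * Nat.clog 2 χ :=
  colored_separating_system_exists_general C
end

section
/- For every DMG G = (V, D, B) there exists a non-adjacent separating system on (V, D) with at most cc(G^{uc}) elements, where G^{uc} is the undirected component graph of G. -/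
universe u

/-!
For an edge clique cover `C₁, …, C_K` of `G^{uc}`, take `I_k = Pa(C_k)`. A clique of `G^{uc}`
spans no directed edge, so `Pa(C_k)` misses `C_k`; a non-adjacent pair `X, Y` is an edge of
`G^{uc}`, hence lies in some `C_k`, and then `Pa({X, Y}) ⊆ Pa(C_k)`.
-/

namespace SimpleGraph

variable {V : Type u} (H : SimpleGraph V)

def IsEdgeCliqueCover {ι : Type*} (C : ι → Set V) : Prop :=
  (∀ k, H.IsClique (C k)) ∧ ∀ x y : V, H.Adj x y → ∃ k, x ∈ C k ∧ y ∈ C k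

variable {H}

theorem IsEdgeCliqueCover.comp_equiv {ι κ : Type*} {C : ι → Set V} (hC : H.IsEdgeCliqueCover C)
    (e : κ ≃ ι) : H.IsEdgeCliqueCover (C ∘ e) := by
  refine ⟨fun k => hC.1 (e k), fun x y hxy => ?_⟩
  obtain ⟨k, hx, hy⟩ := hC.2 x y hxy
  exact ⟨e.symm k, by simpa using hx, by simpa using hy⟩

variable (H)

theorem isEdgeCliqueCover_edges :
    H.IsEdgeCliqueCover fun e : {p : V × V // H.Adj p.1 p.2} => ({e.1.1, e.1.2} : Set V) :=
  ⟨fun e => isClique_pair.mpr fun _ => e.2, fun x y hxy => ⟨⟨(x, y), hxy⟩, by simp, by simp⟩⟩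

theorem exists_isEdgeCliqueCover_fin_ecc [Finite V] :
    ∃ C : Fin (ecc H) → Set V, H.IsEdgeCliqueCover C :=
  Nat.sInf_mem (s := {K | ∃ C : Fin K → Set V, H.IsEdgeCliqueCover C})
    ⟨_, _, (isEdgeCliqueCover_edges H).comp_equiv (Finite.equivFin _).symm⟩

end SimpleGraph

namespace DMG

variable {V : Type u} (G : DMG V)

theorem paSet_mono {W W' : Set V} (h : W ⊆ W') : G.paSet W ⊆ G.paSet W' :=
  fun _ ⟨x, hx, hD⟩ => ⟨x, h hx, hD⟩

theorem notMem_paSet_of_isClique_ucomp {W : Set V} (hW : G.ucomp.IsClique W) {x : V}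
    (hx : x ∈ W) : x ∉ G.paSet W := by
  rintro ⟨w, hw, hD⟩
  obtain rfl | hxw := eq_or_ne x w
  · exact G.D_irrefl x hD
  · exact (hW hx hw hxw).2.1 hD

theorem nonAdjSepSystem_range_paSet {ι : Type*} {C : ι → Set V}
    (hC : G.ucomp.IsEdgeCliqueCover C) : NonAdjSepSystem G (Set.range (G.paSet ∘ C)) := by
  intro X Y hXY hnXY hnYX
  obtain ⟨k, hX, hY⟩ := hC.2 X Y ⟨hXY, hnXY, hnYX⟩
  exact ⟨G.paSet (C k), ⟨k, rfl⟩, G.paSet_mono (Set.insert_subset hX (Set.singleton_subset_iff.mpr hY)),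
    G.notMem_paSet_of_isClique_ucomp (hC.1 k) hX, G.notMem_paSet_of_isClique_ucomp (hC.1 k) hY⟩

end DMG

/-- there is a non-adjacent separating system on `(V, D)` with at most
`cc(G^{uc})` elements. -/
theorem nonAdj_separating_system_le_ecc {V : Type u} [Fintype V] (G : DMG V) :
    ∃ 𝓘 : Set (Set V), 𝓘.Finite ∧ NonAdjSepSystem G 𝓘 ∧ 𝓘.ncard ≤ ecc G.ucomp := by
  obtain ⟨C, hC⟩ := G.ucomp.exists_isEdgeCliqueCover_fin_ecc
  refine ⟨Set.range (G.paSet ∘ C), Set.finite_range _, G.nonAdjSepSystem_range_paSet hC, ?_⟩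
  simpa only [Nat.card_coe_set_eq, Nat.card_fin]
    using Finite.card_range_le (G.paSet ∘ C)
end

section
/- Let G = (V, D, B) be a DMG and let d be the maximum degree of its directed skeleton G^u. Then there exists an adjacent separating system on (V, D) with at most 4d² elements. -/
universe u

/-!
Colour the edges of the directed skeleton strongly: edges sharing a vertex, or joined by a third
edge, get different colours. An edge conflicts with fewer than `2d²` others, so a greedy colouring
with `2d²` colours exists. For a colour `k` let `I_k` be the set of vertices at which `k` is absent,
and `I'_k` the set `I_k` together with the tails of the directed edges of colour `k`. If `X → Y`
has colour `k`, every parent of `X` or `Y` other than `X`, `Y` is adjacent to the edge `XY`, so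
`k` is absent at it; hence `I_k` and `I'_k` are the two sets required for `X → Y`, and the
`2 · 2d²` sets form an adjacent separating system.
-/

theorem StrongAdjE.symm {V : Type*} {H : SimpleGraph V} {e₁ e₂ : Sym2 V}
    (h : StrongAdjE H e₁ e₂) : StrongAdjE H e₂ e₁ := by
  obtain ⟨hne, ⟨v, hv₁, hv₂⟩ | ⟨e₃, he₃, hne₁, hne₂, hv, hu⟩⟩ := h
  exacts [⟨hne.symm, .inl ⟨v, hv₂, hv₁⟩⟩, ⟨hne.symm, .inr ⟨e₃, he₃, hne₂, hne₁, hu, hv⟩⟩]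

theorem StrongAdjE.exists_mem_neighborSet {V : Type*} {H : SimpleGraph V} {x y : V}
    {e : Sym2 V} (hxy : H.Adj x y) (h : StrongAdjE H s(x, y) e) :
    ∃ w ∈ H.neighborSet x ∪ H.neighborSet y, w ∈ e := by
  obtain ⟨v, hv, u, hu, huv⟩ : ∃ v ∈ s(x, y), ∃ u ∈ e, u = v ∨ H.Adj v u := by
    rcases h.2 with ⟨v, hv, hve⟩ | ⟨e₃, he₃, -, -, ⟨v, hv, hv₃⟩, u, hu, hu₃⟩
    · exact ⟨v, hv, v, hve, .inl rfl⟩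
    · refine ⟨v, hv, u, hu, or_iff_not_imp_left.mpr fun huv => ?_⟩
      rwa [(Sym2.mem_and_mem_iff (Ne.symm huv)).mp ⟨hv₃, hu₃⟩] at he₃
  refine ⟨u, ?_, hu⟩
  rcases Sym2.mem_iff.mp hv with rfl | rfl <;> rcases huv with rfl | huv
  exacts [.inr hxy.symm, .inl huv, .inl hxy, .inr huv]

namespace SimpleGraph

variable {α : Type*}

theorem colorable_of_forall_ncard_neighborSet_lt [Finite α] (H : SimpleGraph α) {n : ℕ}
    (h : ∀ v, (H.neighborSet v).ncard < n) : H.Colorable n := by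
  classical
  have := Fintype.ofFinite α
  rcases isEmpty_or_nonempty α with hα | ⟨⟨v₀⟩⟩
  · exact .of_isEmpty n
  suffices ∀ s : Finset α, ∃ c : α → Fin n, ∀ x ∈ s, ∀ y ∈ s, H.Adj x y → c x ≠ c y by
    obtain ⟨c, hc⟩ := this Finset.univ
    exact ⟨⟨c, fun hxy => hc _ (Finset.mem_univ _) _ (Finset.mem_univ _) hxy⟩⟩
  intro s
  induction s using Finset.induction_on with
  | empty => exact ⟨fun _ => ⟨0, (Nat.zero_le _).trans_lt (h v₀)⟩, by simp⟩
  | @insert a s ha ih =>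
    obtain ⟨c, hc⟩ := ih
    obtain ⟨k, hk⟩ : ∃ k : Fin n, k ∉ c '' H.neighborSet a := by
      by_contra! hall
      have := (Set.ncard_image_le (f := c) (Set.toFinite _)).trans_lt (h a)
      rw [Set.eq_univ_of_forall hall, Set.ncard_univ, Nat.card_eq_fintype_card,
        Fintype.card_fin] at this
      exact lt_irrefl _ this
    refine ⟨Function.update c a k, ?_⟩
    have hfresh : ∀ x ∈ s, H.Adj a x → k ≠ c x := fun x _ hax hkx => hk ⟨x, hax, hkx.symm⟩
    intro x hx y hy hxy
    rcases Finset.mem_insert.mp hx with rfl | hxs <;>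
      rcases Finset.mem_insert.mp hy with rfl | hys
    · exact absurd hxy (H.loopless.irrefl _)
    · rw [Function.update_self, Function.update_of_ne (ne_of_mem_of_not_mem hys ha)]
      exact hfresh y hys hxy
    · rw [Function.update_self, Function.update_of_ne (ne_of_mem_of_not_mem hxs ha)]
      exact (hfresh x hxs hxy.symm).symm
    · rw [Function.update_of_ne (ne_of_mem_of_not_mem hxs ha),
        Function.update_of_ne (ne_of_mem_of_not_mem hys ha)]
      exact hc x hxs y hys hxy

/-- Its proper colourings are the strong edge colourings of `H`. -/
def strongConflictGraph (H : SimpleGraph α) : SimpleGraph (Sym2 α) where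
  Adj e₁ e₂ := e₁ ∈ H.edgeSet ∧ e₂ ∈ H.edgeSet ∧ StrongAdjE H e₁ e₂
  symm := ⟨fun _ _ ⟨h₁, h₂, h⟩ => ⟨h₂, h₁, h.symm⟩⟩
  loopless := ⟨fun _ h => h.2.2.1 rfl⟩

/-- Every strong neighbour of `s(x, y)` is an edge at one of the at most `2d` vertices of
`N(x) ∪ N(y)`, and `s(x, y)` itself is one of these at most `2d²` edges. -/
theorem ncard_neighborSet_strongConflictGraph_lt [Finite α] {H : SimpleGraph α} {d : ℕ}
    (hdeg : ∀ v, (H.neighborSet v).ncard ≤ d) {e : Sym2 α} (he : e ∈ H.edgeSet) :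
    (H.strongConflictGraph.neighborSet e).ncard < 2 * d ^ 2 := by
  classical
  have := Fintype.ofFinite α
  induction e using Sym2.ind with | _ x y =>
  have hxy : H.Adj x y := he
  set W := (H.neighborSet x ∪ H.neighborSet y).toFinset
  set U := ⋃ w ∈ W, H.incidenceSet w
  have hsub : H.strongConflictGraph.neighborSet s(x, y) ⊆ U \ {s(x, y)} := by
    intro e' hadj
    obtain ⟨w, hw, hwe'⟩ := hadj.2.2.exists_mem_neighborSet hxy
    exact ⟨Set.mem_biUnion (Set.mem_toFinset.mpr hw) ⟨hadj.2.1, hwe'⟩, fun h => hadj.2.2.1 h.symm⟩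
  have hxyU : s(x, y) ∈ U :=
    Set.mem_biUnion (Set.mem_toFinset.mpr (.inr hxy.symm)) ⟨he, Sym2.mem_mk_left x y⟩
  have hU : U.ncard ≤ 2 * d ^ 2 :=
    calc U.ncard ≤ ∑ w ∈ W, (H.incidenceSet w).ncard := W.set_ncard_biUnion_le _
      _ ≤ ∑ _w ∈ W, d := Finset.sum_le_sum fun w _ =>
          (Set.ncard_congr' (H.incidenceSetEquivNeighborSet w)).trans_le (hdeg w)
      _ = W.card * d := by rw [Finset.sum_const, smul_eq_mul]
      _ ≤ (d + d) * d := by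
          gcongr
          rw [← Set.ncard_eq_toFinset_card']
          exact (Set.ncard_union_le _ _).trans (add_le_add (hdeg x) (hdeg y))
      _ = 2 * d ^ 2 := by ring
  have hUpos : 0 < U.ncard := (Set.ncard_pos (Set.toFinite _)).mpr ⟨_, hxyU⟩
  calc (H.strongConflictGraph.neighborSet s(x, y)).ncard ≤ (U \ {s(x, y)}).ncard :=
        Set.ncard_le_ncard hsub (Set.toFinite _)
    _ = U.ncard - 1 := Set.ncard_sdiff_singleton_of_mem hxyU
    _ < 2 * d ^ 2 := by omega

theorem strongConflictGraph_colorable [Finite α] (H : SimpleGraph α) {d : ℕ} (hd : 0 < d)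
    (hdeg : ∀ v, (H.neighborSet v).ncard ≤ d) : H.strongConflictGraph.Colorable (2 * d ^ 2) := by
  refine colorable_of_forall_ncard_neighborSet_lt _ fun e => ?_
  by_cases he : e ∈ H.edgeSet
  · exact ncard_neighborSet_strongConflictGraph_lt hdeg he
  · rw [Set.eq_empty_of_forall_notMem (s := H.strongConflictGraph.neighborSet e)
      fun _ h => he h.1, Set.ncard_empty]
    positivity

variable {κ : Type*} (H : SimpleGraph α)

def colorFreeVerts (c : Sym2 α → κ) (k : κ) : Set α :=
  {v | ∀ e ∈ H.edgeSet, c e = k → v ∉ e}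

variable {H} (c : H.strongConflictGraph.Coloring κ) {e : Sym2 α}

theorem notMem_colorFreeVerts (he : e ∈ H.edgeSet) {v : α} (hv : v ∈ e) :
    v ∉ H.colorFreeVerts c (c e) :=
  fun hfree => hfree e he rfl hv

theorem mem_colorFreeVerts_of_adj (he : e ∈ H.edgeSet) {a z : α} (ha : a ∈ e) (hza : H.Adj z a)
    (hz : z ∉ e) : z ∈ H.colorFreeVerts c (c e) := by
  intro e' he' hcol hze'
  have hne : e ≠ e' := fun h => hz (h ▸ hze')
  refine c.valid ⟨he, he', hne, ?_⟩ hcol.symm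
  by_cases hza' : s(z, a) = e'
  · exact .inl ⟨a, ha, hza' ▸ Sym2.mem_mk_right z a⟩
  · exact .inr ⟨s(z, a), hza, fun h => hz (h ▸ Sym2.mem_mk_left z a), hza',
      ⟨a, ha, Sym2.mem_mk_right z a⟩, z, hze', Sym2.mem_mk_left z a⟩

end SimpleGraph

namespace DMG

variable {V : Type u} {κ : Type*} (G : DMG V)

theorem skel_adj_of_D {x y : V} (h : G.D x y) : G.skel.Adj x y :=
  ⟨fun hxy => G.D_irrefl x (hxy ▸ h), .inl h⟩

def tailsOfColor (c : Sym2 V → κ) (k : κ) : Set V :=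
  {v | ∃ w, G.D v w ∧ c s(v, w) = k}

variable {G} (c : G.skel.strongConflictGraph.Coloring κ) {X Y : V}

theorem paSet_pair_diff_subset_colorFreeVerts (hXY : G.D X Y) :
    G.paSet {X, Y} \ {X, Y} ⊆ G.skel.colorFreeVerts c (c s(X, Y)) := by
  rintro Z ⟨⟨A, hA, hZA⟩, hZ⟩
  have hpair : ∀ v, v ∈ ({X, Y} : Set V) ↔ v ∈ s(X, Y) := by
    simp only [Sym2.mem_iff, Set.mem_insert_iff, Set.mem_singleton_iff, implies_true]
  exact SimpleGraph.mem_colorFreeVerts_of_adj c (G.skel_adj_of_D hXY) ((hpair A).mp hA)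
    (G.skel_adj_of_D hZA) (mt (hpair Z).mpr hZ)

/-- An edge `Y → W` of the colour of `X → Y` would be strongly adjacent to it unless `W = X`. -/
theorem notMem_tailsOfColor (hXY : G.D X Y) (hYX : ¬ G.D Y X) :
    Y ∉ G.tailsOfColor c (c s(X, Y)) := by
  rintro ⟨W, hYW, hcol⟩
  have hWX : W ≠ X := fun h => hYX (h ▸ hYW)
  refine c.valid ⟨G.skel_adj_of_D hXY, G.skel_adj_of_D hYW, ?_, .inl ?_⟩ hcol.symm
  · rw [Ne, Sym2.eq_swap, Sym2.congr_right]
    exact hWX.symm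
  · exact ⟨Y, Sym2.mem_mk_right X Y, Sym2.mem_mk_left Y W⟩

theorem adjSepSystem_of_coloring :
    AdjSepSystem G (Set.range (G.skel.colorFreeVerts c) ∪
      Set.range fun k => G.skel.colorFreeVerts c k ∪ G.tailsOfColor c k) := by
  intro X Y hXY hYX
  have hedge : s(X, Y) ∈ G.skel.edgeSet := G.skel_adj_of_D hXY
  have hY : Y ∉ G.skel.colorFreeVerts c (c s(X, Y)) :=
    SimpleGraph.notMem_colorFreeVerts c hedge (Sym2.mem_mk_right X Y)
  refine ⟨⟨_, .inl ⟨c s(X, Y), rfl⟩, paSet_pair_diff_subset_colorFreeVerts c hXY,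
    SimpleGraph.notMem_colorFreeVerts c hedge (Sym2.mem_mk_left X Y), hY⟩,
    ⟨_, .inr ⟨c s(X, Y), rfl⟩, ?_, .inr ⟨Y, hXY, rfl⟩,
    fun h => h.elim hY (notMem_tailsOfColor c hXY hYX)⟩⟩
  rintro Z ⟨hZ, hZY⟩
  by_cases hZX : Z = X
  · exact .inr ⟨Y, hZX ▸ hXY, hZX ▸ rfl⟩
  · exact .inl (paSet_pair_diff_subset_colorFreeVerts c hXY ⟨hZ, by simp_all⟩)

end DMG

/-- there is an adjacent separating system on `(V, D)` with at most
`4d²` elements, `d` being the maximum degree of the directed skeleton. -/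
theorem adj_separating_system_le_maxdeg {V : Type u} [Fintype V] (G : DMG V) (d : ℕ)
    (hd : IsGreatest {m | ∃ x : V, ({y | G.skel.Adj x y}).ncard = m} d) :
    ∃ 𝓘 : Set (Set V), 𝓘.Finite ∧ AdjSepSystem G 𝓘 ∧ 𝓘.ncard ≤ 4 * d ^ 2 := by
  have hdeg : ∀ x, (G.skel.neighborSet x).ncard ≤ d := fun x => hd.2 ⟨x, rfl⟩
  rcases Nat.eq_zero_or_pos d with rfl | hd_pos
  · refine ⟨∅, Set.finite_empty, fun X Y hXY _ => absurd (hdeg X) ?_, by simp⟩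
    exact ((Set.ncard_pos (Set.toFinite _)).mpr ⟨Y, G.skel_adj_of_D hXY⟩).not_ge
  obtain ⟨c⟩ := G.skel.strongConflictGraph_colorable hd_pos hdeg
  have hrange : ∀ f : Fin (2 * d ^ 2) → Set V, (Set.range f).ncard ≤ 2 * d ^ 2 := fun f =>
    (Finite.card_range_le f).trans_eq (Nat.card_fin _)
  refine ⟨_, (Set.finite_range _).union (Set.finite_range _), DMG.adjSepSystem_of_coloring c, ?_⟩
  calc _ ≤ 2 * d ^ 2 + 2 * d ^ 2 :=
        (Set.ncard_union_le _ _).trans (add_le_add (hrange _) (hrange _))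
    _ = 4 * d ^ 2 := by ring
end

section
/- For every finite set V with |V| = n and every positive integer M with M < n, there exists an (n, M)-separating system on V with at most ⌈n/M⌉ · ⌈log_{⌈n/M⌉} n⌉ elements. -/
universe u

/-! Identify `V` with `{0, …, n - 1}` and put `b = ⌈n / M⌉`, `t = ⌈log_b n⌉`, so that
`n ≤ M b` and `n ≤ b ^ t`. For `j < t` colour `x` by `x mod b` if `j = 0` and by
`(d_j x + x) mod b` otherwise, where `d_j x` is the `j`-th base-`b` digit of `x`. On a colour
class `x / b` determines `x`, so each class has at most `M` elements; and the `t` colours of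
`x` together determine all its digits, hence `x`. The `b t` colour classes form the separating
system. -/

theorem Nat.eq_of_div_pow_mod_eq {b t x y : ℕ} (hx : x < b ^ t) (hy : y < b ^ t)
    (h : ∀ j < t, x / b ^ j % b = y / b ^ j % b) : x = y := by
  have hmod : ∀ j ≤ t, x % b ^ j = y % b ^ j := by
    intro j hj
    induction j with
    | zero => simp only [pow_zero, Nat.mod_one]
    | succ j ih => rw [Nat.mod_pow_succ, Nat.mod_pow_succ, ih (by omega), h j (by omega)]
  simpa [Nat.mod_eq_of_lt hx, Nat.mod_eq_of_lt hy] using hmod t le_rfl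

theorem exists_separating_family_of_injective_colorings {V ι κ : Type*} [Finite ι] [Finite κ]
    (c : ι → V → κ) (hc : Function.Injective fun v j => c j v) (M : ℕ)
    (hfiber : ∀ j k, {v | c j v = k}.ncard ≤ M) :
    ∃ 𝓘 : Set (Set V), 𝓘.Finite ∧ (∀ I ∈ 𝓘, I.ncard ≤ M) ∧
      (∀ X Y : V, X ≠ Y → ∃ I ∈ 𝓘, X ∈ I ∧ Y ∉ I) ∧
      𝓘.ncard ≤ Nat.card ι * Nat.card κ := by
  let fiber : ι × κ → Set V := fun p => {v | c p.1 v = p.2}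
  refine ⟨Set.range fiber, Set.finite_range _, ?_, ?_, ?_⟩
  · rintro _ ⟨⟨j, k⟩, rfl⟩
    exact hfiber j k
  · intro X Y hXY
    obtain ⟨j, hj⟩ := Function.ne_iff.1 (hc.ne hXY)
    exact ⟨fiber (j, c j X), ⟨_, rfl⟩, rfl, fun h => hj h.symm⟩
  · calc (Set.range fiber).ncard ≤ (Set.univ : Set (ι × κ)).ncard := by
          rw [← Set.image_univ]; exact Set.ncard_image_le
      _ = Nat.card ι * Nat.card κ := by rw [Set.ncard_univ, Nat.card_prod]

def shiftedDigit (b j x : ℕ) : ℕ := if j = 0 then x % b else (x / b ^ j + x) % b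

theorem shiftedDigit_lt {b : ℕ} (hb : 0 < b) (j x : ℕ) : shiftedDigit b j x < b := by
  unfold shiftedDigit
  split <;> exact Nat.mod_lt _ hb

theorem injOn_div_shiftedDigit_fiber (b j k : ℕ) :
    Set.InjOn (· / b) {x | shiftedDigit b j x = k} := by
  intro x hx y hy (hdiv : x / b = y / b)
  have h : shiftedDigit b j x = shiftedDigit b j y := hx.trans hy.symm
  have hmod : x % b = y % b := by
    unfold shiftedDigit at h
    split at h
    · exact h
    · have hdigit : x / b ^ j = y / b ^ j := by
        obtain ⟨i, rfl⟩ := Nat.exists_eq_succ_of_ne_zero ‹j ≠ 0›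
        rw [pow_succ', ← Nat.div_div_eq_div_mul, ← Nat.div_div_eq_div_mul, hdiv]
      rw [hdigit] at h
      exact Nat.ModEq.add_left_cancel' _ h
  rw [← Nat.div_add_mod x b, ← Nat.div_add_mod y b, hdiv, hmod]

theorem eq_of_forall_shiftedDigit_eq {b t x y : ℕ} (hx : x < b ^ t) (hy : y < b ^ t)
    (h : ∀ j < t, shiftedDigit b j x = shiftedDigit b j y) : x = y := by
  refine Nat.eq_of_div_pow_mod_eq hx hy fun j hj => ?_
  have h0 : x % b = y % b := by simpa [shiftedDigit] using h 0 (by omega)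
  rcases Nat.eq_zero_or_pos j with rfl | hj0
  · simpa using h0
  · have hj' : (x / b ^ j + x) % b = (y / b ^ j + y) % b := by
      simpa [shiftedDigit, hj0.ne'] using h j hj
    exact Nat.ModEq.add_right_cancel h0 hj'

/-- there is an `(n, M)`-separating system on `V` with at most
`⌈n/M⌉·⌈log_{⌈n/M⌉} n⌉` elements. -/
theorem nM_separating_system_exists {V : Type u} [Fintype V] (n M : ℕ)
    (hn : Fintype.card V = n) (hM : 0 < M) (hMn : M < n) :
    ∃ 𝓘 : Set (Set V), 𝓘.Finite ∧ (∀ I ∈ 𝓘, I.ncard ≤ M) ∧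
      (∀ X Y : V, X ≠ Y → ∃ I ∈ 𝓘, X ∈ I ∧ Y ∉ I) ∧
      𝓘.ncard ≤ ((n + M - 1) / M) * Nat.clog ((n + M - 1) / M) n := by
  set b := (n + M - 1) / M
  have hnb : n ≤ M * b := le_smul_ceilDiv (b := n) hM
  have hb : 1 < b := Nat.lt_of_mul_lt_mul_left (a := M) (by omega)
  set t := Nat.clog b n
  have hnt : n ≤ b ^ t := Nat.le_pow_clog hb n
  let e : V ≃ Fin n := Fintype.equivFinOfCardEq hn
  let c : Fin t → V → Fin b := fun j v =>
    ⟨shiftedDigit b j (e v), shiftedDigit_lt (by omega) _ _⟩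
  have hc : Function.Injective fun v j => c j v := fun v w hvw =>
    e.injective <| Fin.ext <| eq_of_forall_shiftedDigit_eq ((e v).isLt.trans_le hnt)
      ((e w).isLt.trans_le hnt) fun j hj => congrArg Fin.val (congrFun hvw ⟨j, hj⟩)
  have hfiber : ∀ j k, {v | c j v = k}.ncard ≤ M := by
    intro j k
    calc {v | c j v = k}.ncard ≤ (Set.Iio M).ncard := by
          refine Set.ncard_le_ncard_of_injOn _ (fun v _ => ?_)
            ((injOn_div_shiftedDigit_fiber b j k).comp
              (Fin.val_injective.comp e.injective).injOn fun v hv => congrArg Fin.val hv)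
          exact (Nat.div_lt_iff_lt_mul (by omega)).2 ((e v).isLt.trans_le hnb)
      _ = M := by simp
  obtain ⟨𝓘, hfin, hcard, hsep, hsize⟩ :=
    exists_separating_family_of_injective_colorings c hc M hfiber
  exact ⟨𝓘, hfin, hcard, hsep, by simpa [mul_comm] using hsize⟩
end

section
/- Let G = (V, D, B) be a DMG with n vertices and SCC-Anc partition {𝒯_1, …, 𝒯_{l+1}}, and let M be an integer with M ≥ max{ max_{X,Y∈V, X≠Y} |Pa_G({X,Y})|, |T_{l+1}|_n + ζ^{l+1}_max − 1 }. Let C_1, …, C_K be an edge clique cover of the undirected component graph G^{uc}, each clique containing at least two vertices. Then there exists a non-adjacent separating system 𝓘 on (V, D) such that |I| ≤ M for every I ∈ 𝓘 and |𝓘| ≤ Σ_{k=1}^{K} ( 1 + ⌊ ( (|C_k|(|C_k|−1)/2 − 1) · (n − |C_k|) ) / ( M + 1 − max_{X,Y∈C_k, X≠Y} |Pa_G({X,Y})| ) ⌋ ). -/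
universe u

/-!
There are no directed edges inside a clique `W` of `G^{uc}`, so the parent sets `Pa({X, Y})`
of its pairs avoid `W`: each has at most `s ≤ n - |W|` elements, where `s` is the largest of
them, and there are at most `|W|(|W|-1)/2` of them. Uniting them `⌊M/s⌋` at a time gives
interventions of size at most `M` that avoid `W`, and `⌊M/s⌋ · s ≥ M + 1 - s` bounds their
number by the stated quotient. Over a clique cover these separate every non-adjacent pair.
-/

open Finset

theorem Finset.exists_cover_by_subsets_card_le {β : Type*} [DecidableEq β] {q : ℕ} (hq : 0 < q)
    (F : Finset β) :
    ∃ J : Finset (Finset β), #J ≤ (#F + q - 1) / q ∧ (∀ P ∈ J, P ⊆ F ∧ #P ≤ q) ∧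
      ∀ a ∈ F, ∃ P ∈ J, a ∈ P := by
  induction F using Finset.strongInduction with
  | H F ih =>
  by_cases hFq : #F ≤ q
  · rcases F.eq_empty_or_nonempty with rfl | hF
    · exact ⟨∅, by simp, by simp, by simp⟩
    refine ⟨{F}, ?_, by simpa using hFq, fun a ha => ⟨F, mem_singleton_self F, ha⟩⟩
    rw [card_singleton, Nat.le_div_iff_mul_le hq]
    have := hF.card_pos
    omega
  obtain ⟨P, hPF, hP⟩ := exists_subset_card_eq (le_of_not_ge hFq)
  have hPne : P.Nonempty := card_pos.1 (hP ▸ hq)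
  obtain ⟨J, hJ, hJsub, hJcov⟩ := ih (F \ P) (sdiff_ssubset hPF hPne)
  refine ⟨insert P J, ?_, ?_, ?_⟩
  · have hcard : #(F \ P) + q = #F := by rw [card_sdiff_of_subset hPF, hP]; omega
    calc #(insert P J) ≤ #J + 1 := card_insert_le P J
      _ ≤ (#(F \ P) + q - 1) / q + 1 := by omega
      _ = (#F + q - 1) / q := by
        rw [← Nat.add_div_right _ hq, ← hcard]
        congr 1
        omega
  · simp only [mem_insert, forall_eq_or_imp]
    exact ⟨⟨hPF, hP.le⟩, fun Q hQ => ⟨(hJsub Q hQ).1.trans sdiff_subset, (hJsub Q hQ).2⟩⟩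
  · intro a ha
    by_cases haP : a ∈ P
    · exact ⟨P, mem_insert_self P J, haP⟩
    obtain ⟨Q, hQ, haQ⟩ := hJcov a (mem_sdiff.2 ⟨ha, haP⟩)
    exact ⟨Q, mem_insert_of_mem hQ, haQ⟩

theorem Finset.exists_small_unions_cover {α : Type*} {s q M : ℕ} (hq : 0 < q) (hsq : s * q ≤ M)
    (F : Finset (Set α)) (hF : ∀ A ∈ F, A.ncard ≤ s) :
    ∃ J : Finset (Set α), #J ≤ (#F + q - 1) / q ∧ (∀ I ∈ J, I.ncard ≤ M ∧ I ⊆ ⋃₀ ↑F) ∧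
      ∀ A ∈ F, ∃ I ∈ J, A ⊆ I := by
  classical
  obtain ⟨J, hJ, hJsub, hJcov⟩ := F.exists_cover_by_subsets_card_le hq
  refine ⟨J.image fun P => ⋃ A ∈ P, A, card_image_le.trans hJ, ?_, ?_⟩
  · simp only [mem_image, forall_exists_index, and_imp, forall_apply_eq_imp_iff₂]
    intro P hP
    refine ⟨?_, Set.iUnion₂_subset fun A hA => Set.subset_sUnion_of_mem ((hJsub P hP).1 hA)⟩
    calc (⋃ A ∈ P, A).ncard ≤ ∑ A ∈ P, A.ncard := set_ncard_biUnion_le P id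
      _ ≤ #P • s := sum_le_card_nsmul P _ s fun A hA => hF A ((hJsub P hP).1 hA)
      _ ≤ M := by rw [smul_eq_mul, mul_comm]; exact (Nat.mul_le_mul_left s (hJsub P hP).2).trans hsq
  · intro A hA
    obtain ⟨P, hP, hAP⟩ := hJcov A hA
    exact ⟨_, mem_image_of_mem _ hP, Set.subset_biUnion_of_mem (u := id) hAP⟩

theorem exists_chunk_size {f P m s M : ℕ} (hf : f ≤ P) (hsM : s ≤ M) (hsm : s ≤ m) :
    ∃ q, 0 < q ∧ s * q ≤ M ∧ (f + q - 1) / q ≤ 1 + (P - 1) * m / (M + 1 - s) := by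
  rcases Nat.eq_zero_or_pos s with rfl | hs
  · refine ⟨f + 1, f.succ_pos, by simp, le_add_right ?_⟩
    rw [Nat.div_le_iff_le_mul_add_pred f.succ_pos]
    omega
  have hq : 0 < M / s := Nat.div_pos hsM hs
  refine ⟨M / s, hq, Nat.mul_div_le M s, ?_⟩
  rcases Nat.eq_zero_or_pos f with rfl | hf0
  · simp [Nat.div_eq_of_lt (Nat.sub_lt hq one_pos)]
  have hsplit : (f + M / s - 1) / (M / s) = (f - 1) / (M / s) + 1 := by
    rw [← Nat.add_div_right _ hq]; congr 1; omega
  have hgap : M + 1 - s ≤ M / s * s := by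
    have := Nat.div_add_mod M s
    have := Nat.mod_lt M hs
    rw [mul_comm]; omega
  rw [hsplit, add_comm, Nat.add_le_add_iff_left, Nat.le_div_iff_mul_le (by omega)]
  calc (f - 1) / (M / s) * (M + 1 - s) ≤ (f - 1) / (M / s) * (M / s) * s := by
        rw [mul_assoc]; exact Nat.mul_le_mul_left _ hgap
    _ ≤ (f - 1) * s := Nat.mul_le_mul_right s (Nat.div_mul_le_self _ _)
    _ ≤ (P - 1) * m := Nat.mul_le_mul (by omega) hsm

namespace DMG

variable {V : Type u} {G : DMG V}

theorem disjoint_paSet_pair_of_isClique {W : Set V} (hW : G.ucomp.IsClique W) {X Y : V}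
    (hX : X ∈ W) (hY : Y ∈ W) : Disjoint (G.paSet {X, Y}) W := by
  rw [Set.disjoint_left]
  rintro z ⟨w, hw, hzw⟩ hz
  have hwW : w ∈ W := by rcases hw with rfl | rfl <;> assumption
  exact (hW hz hwW fun h => G.D_irrefl z (h ▸ hzw)).2.1 hzw

theorem exists_finset_paSet_pairs (G : DMG V) {W : Set V} (hW : W.Finite) :
    ∃ F : Finset (Set V), #F ≤ W.ncard * (W.ncard - 1) / 2 ∧
      (∀ A ∈ F, ∃ X ∈ W, ∃ Y ∈ W, X ≠ Y ∧ A = G.paSet {X, Y}) ∧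
      ∀ X ∈ W, ∀ Y ∈ W, X ≠ Y → G.paSet {X, Y} ∈ F := by
  classical
  refine ⟨(hW.toFinset.powersetCard 2).image fun P : Finset V => G.paSet ↑P, ?_, ?_, ?_⟩
  · refine card_image_le.trans ?_
    rw [card_powersetCard, ← Set.ncard_eq_toFinset_card W hW, Nat.choose_two_right]
  · simp only [mem_image, mem_powersetCard, card_eq_two]
    rintro A ⟨P, ⟨hPW, X, Y, hne, rfl⟩, rfl⟩
    rw [insert_subset_iff, singleton_subset_iff, hW.mem_toFinset, hW.mem_toFinset] at hPW
    exact ⟨X, hPW.1, Y, hPW.2, hne, by rw [coe_pair]⟩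
  · intro X hX Y hY hne
    refine mem_image.2 ⟨{X, Y}, mem_powersetCard.2 ⟨?_, card_pair hne⟩, by rw [coe_pair]⟩
    rw [insert_subset_iff, singleton_subset_iff, hW.mem_toFinset, hW.mem_toFinset]
    exact ⟨hX, hY⟩

theorem exists_separating_family_of_isClique [Fintype V] {M : ℕ} {W : Set V}
    (hW : G.ucomp.IsClique W) (hM : ∀ X ∈ W, ∀ Y ∈ W, X ≠ Y → (G.paSet {X, Y}).ncard ≤ M) :
    ∃ J : Finset (Set V),
      #J ≤ 1 + ((W.ncard * (W.ncard - 1) / 2 - 1) * (Fintype.card V - W.ncard)) /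
        (M + 1 - sSup {m | ∃ X ∈ W, ∃ Y ∈ W, X ≠ Y ∧ (G.paSet {X, Y}).ncard = m}) ∧
      (∀ I ∈ J, I.ncard ≤ M ∧ Disjoint I W) ∧
      ∀ X ∈ W, ∀ Y ∈ W, X ≠ Y → ∃ I ∈ J, G.paSet {X, Y} ⊆ I := by
  set sizes := {m | ∃ X ∈ W, ∃ Y ∈ W, X ≠ Y ∧ (G.paSet {X, Y}).ncard = m}
  have hle_sSup : ∀ X ∈ W, ∀ Y ∈ W, X ≠ Y → (G.paSet {X, Y}).ncard ≤ sSup sizes :=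
    fun X hX Y hY hne => le_csSup ⟨M, by rintro _ ⟨X, hX, Y, hY, hne, rfl⟩; exact hM X hX Y hY hne⟩
      ⟨X, hX, Y, hY, hne, rfl⟩
  have hsSup_le_M : sSup sizes ≤ M :=
    csSup_le' (by rintro _ ⟨X, hX, Y, hY, hne, rfl⟩; exact hM X hX Y hY hne)
  have hsSup_le_compl : sSup sizes ≤ Fintype.card V - W.ncard := by
    refine csSup_le' ?_
    rintro _ ⟨X, hX, Y, hY, -, rfl⟩
    rw [← Nat.card_eq_fintype_card, ← Set.ncard_compl]
    exact Set.ncard_le_ncard (disjoint_paSet_pair_of_isClique hW hX hY).subset_compl_right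
  obtain ⟨F, hF_card, hF_mem, hF_pair⟩ := G.exists_finset_paSet_pairs W.toFinite
  obtain ⟨q, hq, hsq, hbound⟩ := exists_chunk_size hF_card hsSup_le_M hsSup_le_compl
  obtain ⟨J, hJ_card, hJ, hJ_cover⟩ := F.exists_small_unions_cover hq hsq fun A hA => by
    obtain ⟨X, hX, Y, hY, hne, rfl⟩ := hF_mem A hA
    exact hle_sSup X hX Y hY hne
  refine ⟨J, hJ_card.trans hbound, fun I hI => ⟨(hJ I hI).1, ?_⟩,
    fun X hX Y hY hne => hJ_cover _ (hF_pair X hX Y hY hne)⟩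
  refine Set.disjoint_of_subset_left (hJ I hI).2 (Set.disjoint_sUnion_left.2 fun A hA => ?_)
  obtain ⟨X, hX, Y, hY, -, rfl⟩ := hF_mem A hA
  exact disjoint_paSet_pair_of_isClique hW hX hY

end DMG

theorem bounded_nonAdj_separating_system_general {V : Type u} [Fintype V] (G : DMG V)
    (n : ℕ) (hn : Fintype.card V = n) (M : ℕ)
    (hM1 : ∀ X Y : V, X ≠ Y → (G.paSet {X, Y}).ncard ≤ M)
    (K : ℕ) (C : Fin K → Set V)
    (hclique : ∀ k, (G.ucomp).IsClique (C k))
    (hcover : ∀ x y : V, (G.ucomp).Adj x y → ∃ k, x ∈ C k ∧ y ∈ C k) :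
    ∃ 𝓘 : Set (Set V), 𝓘.Finite ∧ NonAdjSepSystem G 𝓘 ∧
      (∀ I ∈ 𝓘, I.ncard ≤ M) ∧
      𝓘.ncard ≤ ∑ k : Fin K, (1 +
        (((C k).ncard * ((C k).ncard - 1) / 2 - 1) * (n - (C k).ncard)) /
          (M + 1 - sSup {m | ∃ X ∈ C k, ∃ Y ∈ C k,
            X ≠ Y ∧ (G.paSet {X, Y}).ncard = m})) := by
  classical
  subst hn
  choose J hJ_card hJ hJ_sep using fun k =>
    G.exists_separating_family_of_isClique (hclique k) fun X _ Y _ => hM1 X Y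
  refine ⟨↑(univ.biUnion J), finite_toSet _, ?_, ?_, ?_⟩
  · intro X Y hne hXY hYX
    obtain ⟨k, hX, hY⟩ := hcover X Y ⟨hne, hXY, hYX⟩
    obtain ⟨I, hI, hpa⟩ := hJ_sep k X hX Y hY hne
    exact ⟨I, mem_coe.2 (mem_biUnion.2 ⟨k, mem_univ k, hI⟩), hpa,
      Set.disjoint_right.1 (hJ k I hI).2 hX, Set.disjoint_right.1 (hJ k I hI).2 hY⟩
  · intro I hI
    obtain ⟨k, -, hI⟩ := mem_biUnion.1 (mem_coe.1 hI)
    exact (hJ k I hI).1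
  · rw [Set.ncard_coe_finset]
    exact card_biUnion_le.trans (sum_le_sum fun k _ => hJ_card k)

/-- bounded non-adjacent separating system from an edge clique cover. -/
theorem bounded_nonAdj_separating_system {V : Type u} [Fintype V] (G : DMG V)
    (n l : ℕ) (hn : Fintype.card V = n) (hl : G.sccAncLength l) (ζ : ℕ)
    (hζ : IsGreatest {m | ∃ S : Set V, G.sccLayer l S ∧ S.ncard = m} ζ)
    (t : ℕ) (ht : (G.TUnion l).ncard = t) (M : ℕ)
    (hM1 : ∀ X Y : V, X ≠ Y → (G.paSet {X, Y}).ncard ≤ M)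
    (hM2 : t + ζ - 1 ≤ M)
    (K : ℕ) (C : Fin K → Set V)
    (hclique : ∀ k, (G.ucomp).IsClique (C k))
    (hcover : ∀ x y : V, (G.ucomp).Adj x y → ∃ k, x ∈ C k ∧ y ∈ C k)
    (hsize : ∀ k, 2 ≤ (C k).ncard) :
    ∃ 𝓘 : Set (Set V), 𝓘.Finite ∧ NonAdjSepSystem G 𝓘 ∧
      (∀ I ∈ 𝓘, I.ncard ≤ M) ∧
      𝓘.ncard ≤ ∑ k : Fin K, (1 +
        (((C k).ncard * ((C k).ncard - 1) / 2 - 1) * (n - (C k).ncard)) /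
          (M + 1 - sSup {m | ∃ X ∈ C k, ∃ Y ∈ C k,
            X ≠ Y ∧ (G.paSet {X, Y}).ncard = m})) :=
  bounded_nonAdj_separating_system_general G n hn M hM1 K C hclique hcover
end

section
/- Let G = (V, D, B) be a DMG containing a vertex S with Pa_G(S) = Anc_G(S) ∖ {S} and {S, P} ∈ B for every P ∈ Pa_G(S), and containing a vertex F such that (F, X) ∈ D and {F, X} ∈ B for every X ∈ V ∖ {F}. Let r ∈ {d, σ} and let 𝓘 be a collection of subsets of V such that no I ∈ 𝓘 satisfies S ∉ I and Pa_G(S) ⊆ I. Then the DMG G' = (V, D ∖ {(F,S)}, B) is 𝓘-r-Markov equivalent to G. -/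
/-!
For `S ∈ I` the two intervened graphs coincide. Otherwise `G'_Ī` is `G_Ī` without `F → S`, so
every separation of `G_Ī` holds in `G'_Ī`, and a walk between `x` and `y` that is unblocked
given `W` in `G_Ī` has to be rerouted in `G'_Ī`. Whether a walk is blocked at a vertex depends only on the mark of the
incoming edge, so unblocked walks are encoded by a reachability relation on pairs (vertex,
mark), in which rerouting is local.

If `F ∈ I`, the hypothesis on `𝓘` provides a parent `P ∉ I` of `S`, and `F → S` is bypassed by
`F → P → S` or `F → P ↔ S`, which changes no ancestral relation. If `F ∉ I` and some vertex
`T ∉ I ∪ {S}` of `W ∪ {x, y}` exists, `F → T` makes `F`, which is joined to every vertex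
outside `I` by a bidirected edge, a collider that never blocks. Otherwise
`W ∪ {x, y} ⊆ I ∪ {S}`; since `Pa(S) = Anc(S) ∖ {S}`, the only walks left are `x → S`,
`S ← y` and `x → S ← y`, which do not use `F → S`.
-/

universe u

/-- The mark that the last edge of a walk leaves at its current vertex `v`: `head` for an
arrowhead, `tailIn` / `tailOut` for a tail whose other end lies inside / outside the strongly
connected component of `v`, and `start` before the first edge. This is exactly what decides
whether `v` blocks the walk. -/
inductive Mark | start | head | tailIn | tailOut

namespace Mark

/-- `a ≤ b`: every step that `a` lets pass, `b` lets pass too. -/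
instance : LE Mark := ⟨fun a b => a = b ∨ (a = tailOut ∧ b = tailIn)⟩

theorem le_refl (a : Mark) : a ≤ a := Or.inl rfl

end Mark

namespace DMG

variable {V : Type u} {r : SepRule} {W : Set V} {x y : V}

theorem ext {G H : DMG V} (hD : G.D = H.D) (hB : G.B = H.B) : G = H := by
  cases G; cases H; cases hD; cases hB; rfl

theorem intervene_removeDir_comm (G : DMG V) (I : Set V) (F S : V) :
    (G.removeDir F S).intervene I = (G.intervene I).removeDir F S :=
  ext (by funext a b; exact propext and_right_comm) rfl

theorem intervene_removeDir_of_mem (G : DMG V) {I : Set V} {S : V} (F : V) (hS : S ∈ I) :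
    (G.removeDir F S).intervene I = G.intervene I :=
  ext (by funext a b; exact propext ⟨fun h => ⟨h.1.1, h.2⟩,
    fun h => ⟨⟨h.1, fun hab => h.2 (hab.2 ▸ hS)⟩, h.2⟩⟩) rfl

theorem anc_mono {G H : DMG V} (h : ∀ a b, G.D a b → H.D a b) {u v : V} (huv : G.anc u v) :
    H.anc u v :=
  Relation.ReflTransGen.mono h _ _ huv

theorem subset_ancSet (G : DMG V) (W : Set V) : W ⊆ G.ancSet W :=
  fun w hw => ⟨w, hw, .refl⟩

theorem ancSet_mono {G H : DMG V} (h : ∀ u v, G.anc u v → H.anc u v) {W : Set V} :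
    G.ancSet W ⊆ H.ancSet W :=
  fun _ ⟨t, ht, hut⟩ => ⟨t, ht, h _ _ hut⟩

theorem scc_mono {G H : DMG V} (h : ∀ u v, G.anc u v → H.anc u v) (v : V) :
    G.scc v ⊆ H.scc v :=
  fun _ hw => ⟨h _ _ hw.1, h _ _ hw.2⟩

theorem anc_removeDir (G : DMG V) (F S : V) {u v : V} (h : G.anc u v) :
    (G.removeDir F S).anc u v ∨ (G.removeDir F S).anc u F := by
  induction h with
  | refl => exact Or.inl .refl
  | tail _ hbc ih =>
    rename_i b c _
    by_cases hFS : b = F ∧ c = S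
    · exact ih.elim (fun h => Or.inr (hFS.1 ▸ h)) Or.inr
    · exact ih.imp (fun h => h.tail ⟨hbc, hFS⟩) id

theorem ancSet_subset_removeDir {G : DMG V} {F S : V} {U : Set V}
    (hF : F ∈ (G.removeDir F S).ancSet U) : G.ancSet U ⊆ (G.removeDir F S).ancSet U := by
  rintro u ⟨t, ht, hut⟩
  rcases G.anc_removeDir F S hut with hut' | huF
  · exact ⟨t, ht, hut'⟩
  · obtain ⟨t', ht', hFt'⟩ := hF
    exact ⟨t', ht', huF.trans hFt'⟩

theorem anc_intervene_eq {G : DMG V} {I : Set V} {u v : V} (h : (G.intervene I).anc u v)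
    (hv : v ∈ I) : u = v := by
  induction h using Relation.ReflTransGen.head_induction_on with
  | refl => rfl
  | head hbc _ ih => exact absurd (ih ▸ hv) hbc.2

def Edge (K : DMG V) (v : V) : EKind → V → Prop
  | .fwd, w => K.D v w
  | .bwd, w => K.D w v
  | .bi, w => K.B v w

open Classical in
noncomputable def arrivalMark (K : DMG V) (v : V) : EKind → V → Mark
  | .fwd, _ => .head
  | .bwd, w => if v ∈ K.scc w then .tailIn else .tailOut
  | .bi, _ => .head

/-- The negation of the blocking condition of `MPath.blocked` at `v`, for the mark `a` of the
incoming edge and an outgoing edge of kind `g` towards `w`. -/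
def Passes (K : DMG V) (r : SepRule) (W : Set V) (x y : V) : Mark → V → EKind → V → Prop
  | .start, _, _, _ => True
  | .head, v, .fwd, w => v ∈ W → r = .s ∧ w ∈ K.scc v
  | .head, v, _, _ => v ∈ K.ancSet (W ∪ {x, y})
  | .tailIn, v, g, w => v ∈ W → r = .s ∧ (g = .fwd → w ∈ K.scc v)
  | .tailOut, v, _, _ => v ∉ W

/-- `K.Reach r W x y v a`: some unblocked walk from `x` ends at `v` with mark `a`. -/
inductive Reach (K : DMG V) (r : SepRule) (W : Set V) (x y : V) : V → Mark → Prop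
  | start : Reach K r W x y x .start
  | step {v a g w} : Reach K r W x y v a → K.Edge v g w → K.Passes r W x y a v g w →
      Reach K r W x y w (K.arrivalMark v g w)

def Connected (K : DMG V) (r : SepRule) (W : Set V) (x y : V) : Prop :=
  ∃ a, K.Reach r W x y y a

noncomputable def walkMark (K : DMG V) (z : ℕ → V) (e : ℕ → EKind) : ℕ → Mark
  | 0 => .start
  | i + 1 => K.arrivalMark (z i) (e i) (z (i + 1))

section Walks

variable {K : DMG V}

theorem valid_iff_edge (p : MPath V) :
    p.valid K ↔ ∀ i < p.k, K.Edge (p.Z i) (p.E i) (p.Z (i + 1)) := by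
  refine forall₂_congr fun i _ => ?_
  cases p.E i <;> simp [Edge]

theorem blocked_iff_not_passes (p : MPath V) :
    p.blocked K r W x y ↔ ∃ i, 1 ≤ i ∧ i < p.k ∧
      ¬ K.Passes r W x y (K.walkMark p.Z p.E i) (p.Z i) (p.E i) (p.Z (i + 1)) := by
  refine exists_congr fun i => and_congr_right fun hi => and_congr_right fun _ => ?_
  obtain ⟨j, rfl⟩ : ∃ j, i = j + 1 := ⟨i - 1, by omega⟩
  simp only [walkMark, Nat.add_sub_cancel, MPath.collider]
  cases hj : p.E j <;> cases p.E (j + 1) <;> cases r <;>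
    simp [Passes, arrivalMark, MPath.headAtSnd, MPath.headAtFst] <;> split_ifs <;> tauto

theorem walkMark_congr {z z' : ℕ → V} {e e' : ℕ → EKind} {i : ℕ}
    (hz : ∀ j ≤ i, z j = z' j) (he : ∀ j < i, e j = e' j) :
    K.walkMark z e i = K.walkMark z' e' i := by
  cases i with
  | zero => rfl
  | succ i => simp only [walkMark, hz i (by omega), hz (i + 1) le_rfl, he i (by omega)]

theorem Reach.of_not_blocked (p : MPath V) (hp : p.valid K) (hx : p.Z 0 = x)
    (hnb : ¬ p.blocked K r W x y) :
    ∀ i ≤ p.k, K.Reach r W x y (p.Z i) (K.walkMark p.Z p.E i) := by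
  rw [valid_iff_edge] at hp
  rw [blocked_iff_not_passes] at hnb
  intro i
  induction i with
  | zero => exact fun _ => hx ▸ .start
  | succ i ih =>
    intro hi
    refine .step (ih (by omega)) (hp i (by omega)) ?_
    cases i with
    | zero => trivial
    | succ i => exact not_not.mp fun h => hnb ⟨i + 1, by omega, by omega, h⟩

/-- Raw vertex and edge sequences rather than an `MPath`, since the walk may be empty. -/
theorem Reach.exists_walk {v : V} {a : Mark} (h : K.Reach r W x y v a) :
    ∃ (k : ℕ) (z : ℕ → V) (e : ℕ → EKind), z 0 = x ∧ z k = v ∧ K.walkMark z e k = a ∧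
      (∀ i < k, K.Edge (z i) (e i) (z (i + 1))) ∧
      ∀ i, 1 ≤ i → i < k → K.Passes r W x y (K.walkMark z e i) (z i) (e i) (z (i + 1)) := by
  induction h with
  | start => exact ⟨0, fun _ => x, fun _ => .fwd, rfl, rfl, rfl, by simp, by omega⟩
  | @step v a g w _ hvw hp ih =>
    obtain ⟨k, z, e, hz0, hzk, hmark, hedge, hpass⟩ := ih
    set z' := Function.update z (k + 1) w
    set e' := Function.update e k g
    have hz : ∀ j ≤ k, z j = z' j := fun j hj => (Function.update_of_ne (by omega) _ _).symm
    have he : ∀ j < k, e j = e' j := fun j hj => (Function.update_of_ne (by omega) _ _).symm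
    have hz'k : z' k = v := (hz k le_rfl) ▸ hzk
    have hz'k1 : z' (k + 1) = w := Function.update_self ..
    have he'k : e' k = g := Function.update_self ..
    refine ⟨k + 1, z', e', (hz 0 (by omega)) ▸ hz0, hz'k1, ?_, fun i hi => ?_, fun i hi1 hi => ?_⟩
    · simp only [walkMark, hz'k, he'k, hz'k1]
    · rcases Nat.lt_succ_iff_lt_or_eq.mp hi with hi | rfl
      · rw [← hz i (by omega), ← hz (i + 1) (by omega), ← he i hi]
        exact hedge i hi
      · rwa [hz'k, he'k, hz'k1]
    · rw [← walkMark_congr (fun j hj => hz j (by omega)) (fun j hj => he j (by omega))]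
      rcases Nat.lt_succ_iff_lt_or_eq.mp hi with hi | rfl
      · rw [← hz i (by omega), ← hz (i + 1) (by omega), ← he i hi]
        exact hpass i hi1 hi
      · rwa [hz'k, he'k, hz'k1, hmark]

theorem rSep_iff_not_connected (hxy : x ≠ y) : rSep K r W x y ↔ ¬ K.Connected r W x y := by
  constructor
  · rintro hsep ⟨a, h⟩
    obtain ⟨k, z, e, hz0, hzk, -, hedge, hpass⟩ := h.exists_walk
    have hk : 1 ≤ k := Nat.one_le_iff_ne_zero.mpr fun hk => hxy (hz0 ▸ hk ▸ hzk)
    have hb := (blocked_iff_not_passes ⟨k, z, e, hk⟩).mp <|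
      hsep ⟨k, z, e, hk⟩ ((valid_iff_edge _).mpr hedge) hz0 hzk
    obtain ⟨i, hi1, hi, hnp⟩ := hb
    exact hnp (hpass i hi1 hi)
  · intro hc p hp hx hy
    by_contra hnb
    exact hc ⟨_, hy ▸ Reach.of_not_blocked p hp hx hnb p.k le_rfl⟩

end Walks

theorem arrivalMark_bwd_le {K K' : DMG V} {v v' w : V} (h : v ∈ K.scc w → v' ∈ K'.scc w) :
    K.arrivalMark v .bwd w ≤ K'.arrivalMark v' .bwd w := by
  simp only [arrivalMark]
  split_ifs with h1 h2 h2
  · exact Mark.le_refl _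
  · exact absurd (h h1) h2
  · exact Or.inr ⟨rfl, rfl⟩
  · exact Mark.le_refl _

theorem arrivalMark_mono {K K' : DMG V} (h : ∀ u v, K.anc u v → K'.anc u v) (v : V)
    (g : EKind) (w : V) : K.arrivalMark v g w ≤ K'.arrivalMark v g w := by
  cases g
  · exact Mark.le_refl _
  · exact arrivalMark_bwd_le fun hv => scc_mono h w hv
  · exact Mark.le_refl _

theorem Passes.mono {K K' : DMG V} {a b : Mark} {v w : V} {g : EKind}
    (hp : K.Passes r W x y a v g w) (hab : a ≤ b)
    (hA : K.ancSet (W ∪ {x, y}) ⊆ K'.ancSet (W ∪ {x, y})) (hs : K.scc v ⊆ K'.scc v) :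
    K'.Passes r W x y b v g w := by
  rcases hab with rfl | ⟨rfl, rfl⟩
  · cases a <;> cases g <;> simp only [Passes] at hp ⊢
    all_goals first
      | trivial | exact hA hp | exact hp
      | exact fun hv => ⟨(hp hv).1, hs (hp hv).2⟩
      | exact fun hv => ⟨(hp hv).1, fun hg => hs ((hp hv).2 hg)⟩
  · exact fun hv => absurd hv hp

theorem Edge.mono {K K' : DMG V} (hD : ∀ a b, K.D a b → K'.D a b)
    (hB : ∀ a b, K.B a b → K'.B a b) {v w : V} {g : EKind} (h : K.Edge v g w) :
    K'.Edge v g w := by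
  cases g
  exacts [hD _ _ h, hD _ _ h, hB _ _ h]

theorem Reach.step_of_anc {K K' : DMG V} (hanc : ∀ u v, K.anc u v → K'.anc u v)
    {v w : V} {a b : Mark} {g : EKind} (hr : K'.Reach r W x y v b) (hab : a ≤ b)
    (he : K'.Edge v g w) (hp : K.Passes r W x y a v g w) :
    ∃ c, K.arrivalMark v g w ≤ c ∧ K'.Reach r W x y w c :=
  ⟨_, arrivalMark_mono hanc v g w,
    .step hr he (hp.mono hab (ancSet_mono hanc) (scc_mono hanc v))⟩

theorem Reach.mono {K K' : DMG V} (hD : ∀ a b, K.D a b → K'.D a b)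
    (hB : ∀ a b, K.B a b → K'.B a b) {v : V} {a : Mark} (h : K.Reach r W x y v a) :
    ∃ b, a ≤ b ∧ K'.Reach r W x y v b := by
  induction h with
  | start => exact ⟨_, Mark.le_refl _, .start⟩
  | step _ he hp ih =>
    obtain ⟨b, hab, hr⟩ := ih
    exact hr.step_of_anc (fun _ _ => anc_mono hD) hab (he.mono hD hB) hp

theorem Connected.mono {K K' : DMG V} (hD : ∀ a b, K.D a b → K'.D a b)
    (hB : ∀ a b, K.B a b → K'.B a b) (h : K.Connected r W x y) : K'.Connected r W x y :=
  let ⟨_, h⟩ := h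
  let ⟨b, _, h'⟩ := h.mono hD hB
  ⟨b, h'⟩

/-- A directed path from `u` to `v` whose inner vertices all lie outside `A`. -/
def AvoidingPath (K : DMG V) (A : Set V) (u v : V) : Prop :=
  ∃ w, Relation.ReflTransGen (fun b c => K.D b c ∧ c ∉ A) u w ∧ K.D w v

namespace AvoidingPath

variable {K : DMG V} {A : Set V} {u v : V}

theorem anc (h : K.AvoidingPath A u v) : K.anc u v :=
  let ⟨_, hp, hD⟩ := h
  (Relation.ReflTransGen.mono (fun _ _ h => h.1) _ _ hp).tail hD

theorem mono_set {A' : Set V} (hA : A' ⊆ A) (h : K.AvoidingPath A u v) :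
    K.AvoidingPath A' u v :=
  let ⟨w, hp, hD⟩ := h
  ⟨w, Relation.ReflTransGen.mono (fun _ _ h => ⟨h.1, fun h' => h.2 (hA h')⟩) _ _ hp, hD⟩

theorem cons {t : V} (ht : K.D t u) (hu : u ∉ A) (h : K.AvoidingPath A u v) :
    K.AvoidingPath A t v :=
  let ⟨w, hp, hD⟩ := h
  ⟨w, .head ⟨ht, hu⟩ hp, hD⟩

/-- Inner vertices avoid `F ∈ A`, so the path never uses the edge `F → S`. -/
theorem removeDir {F S : V} (hu : u ≠ F) (hF : F ∈ A) (h : K.AvoidingPath A u v) :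
    (K.removeDir F S).AvoidingPath A u v := by
  obtain ⟨w, hp, hD⟩ := h
  have key : ∀ c, Relation.ReflTransGen (fun b c => K.D b c ∧ c ∉ A) u c →
      Relation.ReflTransGen (fun b c => (K.removeDir F S).D b c ∧ c ∉ A) u c ∧ c ≠ F := by
    intro c hc
    induction hc with
    | refl => exact ⟨.refl, hu⟩
    | tail _ hbc ih =>
      exact ⟨ih.1.tail ⟨⟨hbc.1, fun h => ih.2 h.1⟩, hbc.2⟩, fun h => hbc.2 (h ▸ hF)⟩
  exact ⟨w, (key w hp).1, hD, fun h => (key w hp).2 h.1⟩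

end AvoidingPath

section Chains

variable {K : DMG V}

theorem passes_bwd_arrivalMark {v m c : V} {g : EKind} (hm : m ∉ W) :
    K.Passes r W x y (K.arrivalMark v .bwd m) m g c := by
  simp only [arrivalMark]
  split_ifs
  exacts [fun h => absurd h hm, hm]

theorem passes_fwd_of_not_mem {a : Mark} {v c : V} (hv : v ∉ W) :
    K.Passes r W x y a v .fwd c := by
  cases a
  exacts [trivial, fun h => absurd h hv, fun h => absurd h hv, hv]

theorem Reach.head_of_avoidingPath {v u : V} {a : Mark} (hr : K.Reach r W x y v a)
    (hv : ∀ c, K.Passes r W x y a v .fwd c) (hp : K.AvoidingPath W v u) :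
    K.Reach r W x y u .head := by
  obtain ⟨m, hvm, hmu⟩ := hp
  induction hvm using Relation.ReflTransGen.head_induction_on generalizing a with
  | refl => exact .step (g := .fwd) hr hmu (hv u)
  | head hvc _ ih =>
    exact ih (.step (g := .fwd) hr hvc.1 (hv _)) fun _ => passes_fwd_of_not_mem hvc.2

theorem Reach.exists_of_avoidingPath_reverse {v u : V} {a : Mark} (hr : K.Reach r W x y u a)
    (hu : ∀ c, K.Passes r W x y a u .bwd c) (hp : K.AvoidingPath W v u) :
    ∃ b, K.Reach r W x y v b := by
  obtain ⟨m, hvm, hmu⟩ := hp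
  induction hvm generalizing u a with
  | refl => exact ⟨_, .step (g := .bwd) hr hmu (hu _)⟩
  | tail _ hcm ih =>
    exact ih (.step (g := .bwd) hr hmu (hu _)) (fun _ => passes_bwd_arrivalMark hcm.2) hcm.1

/-- Leaving `x`, which has no incoming arrowheads, the walk can only follow directed edges
until it meets a collider or `y`, both ancestors of `W ∪ {x, y}`. -/
theorem Connected.exists_avoidingPath_left (hxy : x ≠ y) (hx : ∀ u, ¬ K.D u x ∧ ¬ K.B u x)
    (h : K.Connected r W x y) :
    ∃ u ∈ K.ancSet (W ∪ {x, y}), K.AvoidingPath (K.ancSet (W ∪ {x, y})) x u := by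
  set A := K.ancSet (W ∪ {x, y})
  have hyA : y ∈ A := ⟨y, by simp, .refl⟩
  obtain ⟨a, h⟩ := h
  have extend : ∀ v w, Relation.ReflTransGen (fun b c => K.D b c ∧ c ∉ A) x v → K.D v w →
      (∃ u ∈ A, K.AvoidingPath A x u) ∨
        Relation.ReflTransGen (fun b c => K.D b c ∧ c ∉ A) x w ∧ w ∉ A := by
    intro v w hxv hvw
    by_cases hw : w ∈ A
    · exact Or.inl ⟨w, hw, v, hxv, hvw⟩
    · exact Or.inr ⟨hxv.tail ⟨hvw, hw⟩, hw⟩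
  suffices inv : ∀ v a, K.Reach r W x y v a → (a = .start ∧ v = x) ∨
      (∃ u ∈ A, K.AvoidingPath A x u) ∨
      (a = .head ∧ Relation.ReflTransGen (fun b c => K.D b c ∧ c ∉ A) x v ∧ v ∉ A) by
    rcases inv y a h with ⟨-, rfl⟩ | hu | ⟨-, -, hyA'⟩
    exacts [absurd rfl hxy, hu, absurd hyA hyA']
  intro v a hr
  induction hr with
  | start => exact Or.inl ⟨rfl, rfl⟩
  | @step v a g w _ he hp ih =>
    rcases ih with ⟨rfl, hv⟩ | hu | ⟨rfl, hxv, hvA⟩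
    · cases g
      · exact (extend _ _ (hv ▸ .refl) he).elim (Or.inr ∘ Or.inl) (Or.inr ∘ Or.inr ∘ .intro rfl)
      · exact absurd (hv ▸ he) (hx w).1
      · exact absurd (K.B_symm _ _ (hv ▸ he)) (hx w).2
    · exact Or.inr (Or.inl hu)
    · cases g
      · exact (extend _ _ hxv he).elim (Or.inr ∘ Or.inl) (Or.inr ∘ Or.inr ∘ .intro rfl)
      all_goals exact absurd hp hvA

/-- Read backwards from `y`, which has no incoming arrowheads, the walk can only go against
directed edges until it meets a collider or `x`, both ancestors of `W ∪ {x, y}`. -/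
theorem Connected.exists_avoidingPath_right (hxy : x ≠ y) (hy : ∀ u, ¬ K.D u y ∧ ¬ K.B u y)
    (h : K.Connected r W x y) :
    ∃ u ∈ K.ancSet (W ∪ {x, y}), K.AvoidingPath (K.ancSet (W ∪ {x, y})) y u := by
  set A := K.ancSet (W ∪ {x, y})
  have hxA : x ∈ A := ⟨x, by simp, .refl⟩
  obtain ⟨a, h⟩ := h
  suffices inv : ∀ v a, K.Reach r W x y v a → (a = .start ∧ v = x) ∨
      (a = .head ∧ ∃ u, K.D u v ∨ K.B u v) ∨ (∃ u ∈ A, K.AvoidingPath A v u) by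
    rcases inv y a h with ⟨-, rfl⟩ | ⟨-, u, hu⟩ | hu
    exacts [absurd rfl hxy, hu.elim (absurd · (hy u).1) (absurd · (hy u).2), hu]
  intro v a hr
  induction hr with
  | start => exact Or.inl ⟨rfl, rfl⟩
  | @step v a g w _ he hp ih =>
    cases g
    · exact Or.inr (Or.inl ⟨rfl, v, Or.inl he⟩)
    · refine Or.inr (Or.inr ?_)
      by_cases hvA : v ∈ A
      · exact ⟨v, hvA, w, .refl, he⟩
      rcases ih with ⟨-, rfl⟩ | ⟨rfl, -⟩ | ⟨u, huA, hu⟩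
      exacts [absurd hxA hvA, absurd hp hvA, ⟨u, huA, hu.cons he hvA⟩]
    · exact Or.inr (Or.inl ⟨rfl, v, Or.inr he⟩)

end Chains

theorem passes_bi_iff_bwd {K : DMG V} {a : Mark} {v w w' : V} :
    K.Passes r W x y a v .bi w ↔ K.Passes r W x y a v .bwd w' := by
  cases a <;> simp [Passes]

theorem passes_bwd_congr {K : DMG V} {a : Mark} {v w w' : V} :
    K.Passes r W x y a v .bwd w ↔ K.Passes r W x y a v .bwd w' :=
  (passes_bi_iff_bwd (w := w)).symm.trans passes_bi_iff_bwd

theorem Edge.removeDir {K : DMG V} {F S v w : V} {g : EKind} (h : K.Edge v g w) :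
    (K.removeDir F S).Edge v g w ∨ (v = F ∧ g = .fwd ∧ w = S) ∨ (v = S ∧ g = .bwd ∧ w = F) := by
  cases g
  · by_cases hvw : v = F ∧ w = S
    · exact Or.inr (Or.inl ⟨hvw.1, rfl, hvw.2⟩)
    · exact Or.inl ⟨h, hvw⟩
  · by_cases hwv : w = F ∧ v = S
    · exact Or.inr (Or.inr ⟨hwv.2, rfl, hwv.1⟩)
    · exact Or.inl ⟨h, hwv⟩
  · exact Or.inl h

section Bypass

variable {K : DMG V} {F S P : V}

theorem anc_removeDir_of_bypass (hFP : K.D F P) (hPS : K.D P S) (hPF : P ≠ F) {u v : V}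
    (h : K.anc u v) : (K.removeDir F S).anc u v := by
  induction h with
  | refl => exact .refl
  | tail _ hbc ih =>
    rename_i b c _
    by_cases hFS : b = F ∧ c = S
    · obtain ⟨rfl, rfl⟩ := hFS
      have hPc : P ≠ c := fun h => K.D_irrefl P (h ▸ hPS)
      exact (ih.tail ⟨hFP, fun h => hPc h.2⟩).tail ⟨hPS, fun h => hPF h.1⟩
    · exact ih.tail ⟨hbc, hFS⟩

/-- The edge `F → S` is replaced by `F → P → S`, or by `F → P ↔ S` when `P ∈ W` (so that `P`
is an open collider); traversed backwards, by `S ← P ← F` or `S ↔ P ← F`. -/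
theorem Reach.removeDir_of_bypass (hFP : K.D F P) (hPS : K.D P S) (hBPS : K.B P S)
    (hPF : P ≠ F) {v : V} {a : Mark} (h : K.Reach r W x y v a) :
    ∃ b, a ≤ b ∧ (K.removeDir F S).Reach r W x y v b := by
  set K' := K.removeDir F S
  have hanc : ∀ u v, K.anc u v → K'.anc u v := fun _ _ => anc_removeDir_of_bypass hFP hPS hPF
  have hPS' : P ≠ S := fun h => K.D_irrefl P (h ▸ hPS)
  have hFP' : K'.D F P := ⟨hFP, fun h => hPS' h.2⟩
  have hPS'' : K'.D P S := ⟨hPS, fun h => hPF h.1⟩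
  have hPscc : S ∈ K'.scc F → P ∈ K'.scc F := fun hS =>
    ⟨.single hFP', (Relation.ReflTransGen.single hPS'').trans hS.2⟩
  have hPA : P ∈ W → P ∈ K'.ancSet (W ∪ {x, y}) := fun hP => ⟨P, Or.inl hP, .refl⟩
  induction h with
  | start => exact ⟨_, Mark.le_refl _, .start⟩
  | @step v a g w _ he hp ih =>
    obtain ⟨b, hab, hr⟩ := ih
    have hp' : K'.Passes r W x y b v g w := hp.mono hab (ancSet_mono hanc) (scc_mono hanc v)
    rcases he.removeDir (F := F) (S := S) with he' | ⟨rfl, rfl, rfl⟩ | ⟨rfl, rfl, rfl⟩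
    · exact hr.step_of_anc hanc hab he' hp
    · have hrP : K'.Reach r W x y P .head := by
        refine .step (g := .fwd) hr hFP' ?_
        cases b <;> simp only [Passes] at hp' ⊢
        exacts [fun hv => ⟨(hp' hv).1, hPscc ((hp' hv).2)⟩,
          fun hv => ⟨(hp' hv).1, fun _ => hPscc ((hp' hv).2 (by trivial))⟩, hp']
      refine ⟨.head, Mark.le_refl _, ?_⟩
      by_cases hPW : P ∈ W
      · exact .step (g := .bi) hrP hBPS (hPA hPW)
      · exact .step (g := .fwd) hrP hPS'' (passes_fwd_of_not_mem hPW)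
    · by_cases hPW : P ∈ W
      · have hrP : K'.Reach r W x y P .head :=
          .step (g := .bi) hr (K.B_symm _ _ hBPS) (passes_bi_iff_bwd.mpr hp')
        exact ⟨_, arrivalMark_bwd_le fun hS => hPscc (scc_mono hanc _ hS),
          .step (g := .bwd) hrP hFP' (hPA hPW)⟩
      · have hrP := Reach.step (g := .bwd) hr hPS'' (passes_bwd_congr.mp hp')
        exact ⟨_, arrivalMark_bwd_le fun hS => hPscc (scc_mono hanc _ hS),
          .step (g := .bwd) hrP hFP' (passes_bwd_arrivalMark hPW)⟩

theorem Connected.removeDir_of_bypass (hFP : K.D F P) (hPS : K.D P S) (hBPS : K.B P S)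
    (hPF : P ≠ F) (h : K.Connected r W x y) : (K.removeDir F S).Connected r W x y :=
  let ⟨_, h⟩ := h
  let ⟨b, _, h'⟩ := h.removeDir_of_bypass hFP hPS hBPS hPF
  ⟨b, h'⟩

end Bypass

section Intervention

variable {G : DMG V} {I : Set V} {F S : V}

theorem intervene_no_arrow {u v : V} (hv : v ∈ I) :
    ¬ (G.intervene I).D u v ∧ ¬ (G.intervene I).B u v :=
  ⟨fun h => h.2 hv, fun h => h.2.2 hv⟩

theorem AvoidingPath.not_mem_intervene {A : Set V} {u v : V}
    (h : (G.intervene I).AvoidingPath A u v) : v ∉ I :=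
  let ⟨_, _, hD⟩ := h
  hD.2

theorem mem_ancSet_removeDir_intervene (hF : ∀ X, X ≠ F → G.D F X) {U : Set V}
    (hT : ∃ T ∈ U, T ∉ I ∧ T ≠ S) : F ∈ ((G.intervene I).removeDir F S).ancSet U := by
  obtain ⟨T, hT, hTI, hTS⟩ := hT
  by_cases hTF : T = F
  · exact ⟨T, hT, hTF ▸ .refl⟩
  · exact ⟨T, hT, .single ⟨⟨hF T hTF, hTI⟩, fun h => hTS h.2⟩⟩

/-- `F`, an ancestor of `W ∪ {x, y}` joined by a bidirected edge to every vertex outside `I`,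
is a collider that never blocks: every vertex outside `I` is reached through it, and an endpoint
in `I` along the directed path given by `Connected.exists_avoidingPath_left` / `_right`. -/
theorem Connected.removeDir_of_hub (hF : ∀ X, X ≠ F → G.D F X ∧ G.B F X) (hFI : F ∉ I)
    (hT : ∃ T ∈ W ∪ {x, y}, T ∉ I ∧ T ≠ S) (hxy : x ≠ y)
    (h : (G.intervene I).Connected r W x y) :
    ((G.intervene I).removeDir F S).Connected r W x y := by
  set K := G.intervene I
  set K' := K.removeDir F S
  set A := K.ancSet (W ∪ {x, y})
  have hFA' : F ∈ K'.ancSet (W ∪ {x, y}) :=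
    mem_ancSet_removeDir_intervene (fun X hX => (hF X hX).1) hT
  have hAA : A ⊆ K'.ancSet (W ∪ {x, y}) := ancSet_subset_removeDir hFA'
  have hFA : F ∈ A := ancSet_mono (fun _ _ => anc_mono (G := K') fun _ _ h => h.1) hFA'
  have hBF : ∀ w, w ∉ I → w ≠ F → K'.B F w := fun w hwI hwF =>
    show K.B F w from ⟨(hF w hwF).2, hFI, hwI⟩
  have hpath : ∀ e u, e ∈ I → K.AvoidingPath A e u → K'.AvoidingPath W e u :=
    fun e u heI hu => (hu.removeDir (ne_of_mem_of_not_mem heI hFI) hFA).mono_set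
      (Set.subset_union_left.trans (K.subset_ancSet _))
  have hxF : x = F ∨ K'.Reach r W x y F .head := by
    by_cases hxF : x = F
    · exact Or.inl hxF
    by_cases hxI : x ∈ I
    · obtain ⟨u, huA, hu⟩ := h.exists_avoidingPath_left hxy fun _ => intervene_no_arrow hxI
      have hru : K'.Reach r W x y u .head :=
        Reach.head_of_avoidingPath .start (fun _ => trivial) (hpath x u hxI hu)
      by_cases huF : u = F
      · exact Or.inr (huF ▸ hru)
      · exact Or.inr (.step (g := .bi) hru (K'.B_symm _ _ (hBF u hu.not_mem_intervene huF))
          (hAA huA))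
    · exact Or.inr (.step (g := .bi) .start (K'.B_symm _ _ (hBF x hxI hxF)) trivial)
  have hreach : ∀ w, w ∉ I → w ≠ x → K'.Reach r W x y w .head := by
    intro w hwI hwx
    by_cases hwF : w = F
    · exact hwF ▸ hxF.resolve_left fun h => hwx (hwF.trans h.symm)
    rcases hxF with rfl | hrF
    · exact .step (g := .bi) .start (hBF w hwI hwF) trivial
    · exact .step (g := .bi) hrF (hBF w hwI hwF) hFA'
  by_cases hyI : y ∈ I
  · obtain ⟨u, huA, hu⟩ := h.exists_avoidingPath_right hxy fun _ => intervene_no_arrow hyI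
    by_cases hux : u = x
    · exact Reach.exists_of_avoidingPath_reverse .start (fun _ => trivial)
        (hux ▸ hpath y u hyI hu)
    · exact Reach.exists_of_avoidingPath_reverse (hreach u hu.not_mem_intervene hux)
        (fun _ => hAA huA) (hpath y u hyI hu)
  · exact ⟨_, hreach y hyI (Ne.symm hxy)⟩

/-- When `W ∪ {x, y} ⊆ I ∪ {S}`, an endpoint in `I` starts a directed path into the
ancestors of `S`, so by the hypothesis on the ancestors of `S` it is a parent of `S`; the
walks `x → S`, `S ← y` and `x → S ← y` (with `S ∈ W`) survive the removal. -/
theorem Connected.removeDir_of_subset (hPa : G.pa S = G.ancSet {S} \ {S}) (hSI : S ∉ I)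
    (hFI : F ∉ I) (hC : ∀ T ∈ W ∪ {x, y}, T ∉ I → T = S) (hxy : x ≠ y)
    (h : (G.intervene I).Connected r W x y) :
    ((G.intervene I).removeDir F S).Connected r W x y := by
  set K := G.intervene I
  set A := K.ancSet (W ∪ {x, y})
  have hAS : ∀ u ∈ A, u ∉ I → K.anc u S ∧ S ∈ W ∪ {x, y} := by
    rintro u ⟨t, ht, hut⟩ huI
    by_cases htI : t ∈ I
    · exact absurd (anc_intervene_eq hut htI ▸ htI) huI
    · exact hC t ht htI ▸ ⟨hut, ht⟩
  have hparent : ∀ e ∈ I, (∃ u ∈ A, K.AvoidingPath A e u) → (K.removeDir F S).D e S := by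
    rintro e heI ⟨u, huA, hu⟩
    have heS : G.anc e S :=
      anc_mono (G := K) (fun _ _ h => h.1) (hu.anc.trans (hAS u huA hu.not_mem_intervene).1)
    have hpa : e ∈ G.pa S := hPa ▸ ⟨⟨S, rfl, heS⟩, fun h => hSI (h ▸ heI)⟩
    exact ⟨⟨hpa, hSI⟩, fun h => ne_of_mem_of_not_mem heI hFI h.1⟩
  by_cases hxI : x ∈ I <;> by_cases hyI : y ∈ I
  · obtain ⟨u, huA, hu⟩ := h.exists_avoidingPath_left hxy fun _ => intervene_no_arrow hxI
    have hSW : S ∈ W := by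
      rcases (hAS u huA hu.not_mem_intervene).2 with hSW | rfl | rfl
      exacts [hSW, absurd hxI hSI, absurd hyI hSI]
    have hrS : (K.removeDir F S).Reach r W x y S .head :=
      .step (g := .fwd) .start (hparent x hxI ⟨u, huA, hu⟩) trivial
    exact ⟨_, .step (g := .bwd) hrS
      (hparent y hyI (h.exists_avoidingPath_right hxy fun _ => intervene_no_arrow hyI))
      ⟨S, Or.inl hSW, .refl⟩⟩
  · obtain rfl : y = S := hC y (Or.inr (Or.inr rfl)) hyI
    exact ⟨_, .step (g := .fwd) .start
      (hparent x hxI (h.exists_avoidingPath_left hxy fun _ => intervene_no_arrow hxI)) trivial⟩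
  · obtain rfl : x = S := hC x (Or.inr (Or.inl rfl)) hxI
    exact ⟨_, .step (g := .bwd) .start
      (hparent y hyI (h.exists_avoidingPath_right hxy fun _ => intervene_no_arrow hyI)) trivial⟩
  · exact absurd
      ((hC x (Or.inr (Or.inl rfl)) hxI).trans (hC y (Or.inr (Or.inr rfl)) hyI).symm) hxy

end Intervention

theorem IM_eq_of_connected_iff {K K' : DMG V}
    (h : ∀ x y W, x ≠ y → (K.Connected r W x y ↔ K'.Connected r W x y)) : IM K r = IM K' r := by
  ext ⟨x, y, W⟩
  refine and_congr_right fun hxy => and_congr_right fun _ => and_congr_right fun _ => ?_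
  rw [rSep_iff_not_connected hxy, rSep_iff_not_connected hxy, h x y W hxy]

end DMG

theorem markov_equiv_remove_directed_general {V : Type u} (G : DMG V) (r : SepRule)
    (S F : V)
    (hPa : G.pa S = G.ancSet {S} \ {S})
    (hSB : ∀ P ∈ G.pa S, G.B S P)
    (hF : ∀ X : V, X ≠ F → G.D F X ∧ G.B F X)
    (𝓘 : Set (Set V))
    (h𝓘 : ¬ ∃ I ∈ 𝓘, S ∉ I ∧ G.pa S ⊆ I) :
    IMEquiv G (G.removeDir F S) r 𝓘 := by
  intro I hI
  by_cases hSI : S ∈ I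
  · rw [G.intervene_removeDir_of_mem F hSI]
  rw [G.intervene_removeDir_comm]
  refine DMG.IM_eq_of_connected_iff fun x y W hxy =>
    ⟨fun h => ?_, .mono (fun _ _ h => h.1) fun _ _ h => h⟩
  by_cases hFI : F ∈ I
  · obtain ⟨P, hPS, hPI⟩ : ∃ P ∈ G.pa S, P ∉ I := by
      by_contra! hP
      exact h𝓘 ⟨I, hI, hSI, hP⟩
    have hPF : P ≠ F := fun h => hPI (h ▸ hFI)
    exact h.removeDir_of_bypass ⟨(hF P hPF).1, hPI⟩ ⟨hPS, hSI⟩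
      ⟨G.B_symm _ _ (hSB P hPS), hPI, hSI⟩ hPF
  by_cases hT : ∃ T ∈ W ∪ {x, y}, T ∉ I ∧ T ≠ S
  · exact h.removeDir_of_hub hF hFI hT hxy
  · simp only [not_exists, not_and, not_not] at hT
    exact h.removeDir_of_subset hPa hSI hFI hT hxy

/-- removing the edge `(F, S)` yields an `𝓘`-`r`-Markov equivalent DMG
whenever no experiment in `𝓘` intervenes on all parents of `S` while leaving `S` alone. -/
theorem markov_equiv_remove_directed {V : Type u} [Fintype V] (G : DMG V) (r : SepRule)
    (S F : V)
    (hPa : G.pa S = G.ancSet {S} \ {S})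
    (hSB : ∀ P ∈ G.pa S, G.B S P)
    (hF : ∀ X : V, X ≠ F → G.D F X ∧ G.B F X)
    (𝓘 : Set (Set V))
    (h𝓘 : ¬ ∃ I ∈ 𝓘, S ∉ I ∧ G.pa S ⊆ I) :
    IMEquiv G (G.removeDir F S) r 𝓘 :=
  markov_equiv_remove_directed_general G r S F hPa hSB hF 𝓘 h𝓘
end
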